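/- Overestimation property: for any lower-triangular sparsity pattern E containing all diagonal pairs, the approximation D(E) = −∑ᵢ log(det(A(Eᵢ \ {i}))/det(A(Eᵢ))) satisfies log det(A) ≤ D(E), with equality when E is the full lower-triangular pattern. -/

import Mathlib

open Matrix Finset

/-- The principal submatrix of `A` on the index set `γ`. -/
def psub {n : ℕ} (A : Matrix (Fin n) (Fin n) ℝ) (γ : Finset (Fin n)) :
    Matrix γ γ ℝ :=
  A.submatrix Subtype.val Subtype.val

/-- The column indices of row `i` of the sparsity pattern `E`. -/
def rowSet {n : ℕ} (E : Finset (Fin n × Fin n)) (i : Fin n) : Finset (Fin n) :=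
  Finset.univ.filter fun j => (i, j) ∈ E

/-- The log-determinant approximation associated with a sparsity pattern. -/
noncomputable def Dapprox {n : ℕ} (A : Matrix (Fin n) (Fin n) ℝ)
    (E : Finset (Fin n × Fin n)) : ℝ :=
  -∑ i : Fin n,
    Real.log ((psub A ((rowSet E i).erase i)).det / (psub A (rowSet E i)).det)

namespace Stmt16Aux

variable {n : ℕ}

/-- Schur complement of the block `γ` at the pivot `i`. -/
noncomputable def schur (A : Matrix (Fin n) (Fin n) ℝ) (γ : Finset (Fin n)) (i : Fin n) : ℝ :=
  A i i - (fun j : γ => A ((j : Fin n)) i) ⬝ᵥ (psub A γ)⁻¹ *ᵥ (fun j : γ => A ((j : Fin n)) i)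

lemma sum_extend (γ : Finset (Fin n)) (x : γ → ℝ) (g : Fin n → ℝ) :
    ∑ j, (if h : j ∈ γ then x ⟨j, h⟩ else 0) * g j = ∑ j : γ, x j * g j := by
  rw [← Finset.sum_subset (Finset.subset_univ γ)
        (by intro a _ ha; simp [ha]),
      ← Finset.sum_coe_sort γ (fun a => (if h : a ∈ γ then x ⟨a, h⟩ else 0) * g a)]
  exact Finset.sum_congr rfl fun j _ => by simp [j.2]

lemma sum_restrict {γ δ : Finset (Fin n)} (h : γ ⊆ δ) (w : γ → ℝ) (g : Fin n → ℝ) :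
    ∑ j : δ, (if h : (j : Fin n) ∈ γ then w ⟨j, h⟩ else 0) * g j = ∑ j : γ, w j * g j := by
  rw [Finset.sum_coe_sort δ (fun a => (if h : a ∈ γ then w ⟨a, h⟩ else 0) * g a),
      ← Finset.sum_subset h (by intro a _ ha; simp [ha]),
      ← Finset.sum_coe_sort γ (fun a => (if h : a ∈ γ then w ⟨a, h⟩ else 0) * g a)]
  exact Finset.sum_congr rfl fun j _ => by simp [j.2]

lemma psub_posDef {A : Matrix (Fin n) (Fin n) ℝ} (hA : A.PosDef) (γ : Finset (Fin n)) :
    (psub A γ).PosDef := by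
  rw [posDef_iff_dotProduct_mulVec]
  constructor
  · exact hA.isHermitian.submatrix _
  · intro x hx
    set y : Fin n → ℝ := fun j => if h : j ∈ γ then x ⟨j, h⟩ else 0 with hy
    have hyne : y ≠ 0 := by
      intro h0
      apply hx
      funext j
      have := congrFun h0 (j : Fin n)
      simpa [hy, j.2] using this
    have hpos := hA.dotProduct_mulVec_pos hyne
    have hdq : y ⬝ᵥ A *ᵥ y = x ⬝ᵥ (psub A γ) *ᵥ x := by
      simp only [dotProduct, mulVec]
      calc ∑ j, y j * ∑ k, A j k * y k
          = ∑ j : γ, x j * ∑ k, A (j : Fin n) k * y k :=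
            sum_extend γ x (fun j => ∑ k, A j k * y k)
        _ = ∑ j : γ, x j * ∑ k : γ, (psub A γ) j k * x k := by
            apply Finset.sum_congr rfl; intro j _
            congr 1
            calc ∑ k, A (j:Fin n) k * y k = ∑ k, y k * A (j:Fin n) k := by
                  simp [mul_comm]
              _ = ∑ k : γ, x k * A (j:Fin n) (k:Fin n) :=
                  sum_extend γ x (fun k => A (j:Fin n) k)
              _ = ∑ k : γ, (psub A γ) j k * x k := by
                  apply Finset.sum_congr rfl; intro k _; exact mul_comm _ _
    calc (0:ℝ) < y ⬝ᵥ A *ᵥ y := by simpa using hpos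
      _ = x ⬝ᵥ (psub A γ) *ᵥ x := hdq

lemma psub_symm {A : Matrix (Fin n) (Fin n) ℝ} (hA : A.PosDef) (γ : Finset (Fin n)) :
    (psub A γ)ᵀ = psub A γ := by
  have := (psub_posDef hA γ).isHermitian
  simpa [Matrix.IsHermitian, Matrix.conjTranspose_eq_transpose_of_trivial] using this

lemma A_symm {A : Matrix (Fin n) (Fin n) ℝ} (hA : A.PosDef) (i j : Fin n) : A i j = A j i := by
  have := hA.isHermitian.apply i j
  simpa using this.symm

/-- Key algebraic identity: the "objective value" of a weight vector w equals
the Schur complement plus a PSD quadratic remainder. -/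
lemma quad_decomp {A : Matrix (Fin n) (Fin n) ℝ} (hA : A.PosDef) (γ : Finset (Fin n))
    (i : Fin n) (w : γ → ℝ) :
    A i i + 2 * ∑ j : γ, w j * A i j + ∑ j : γ, ∑ k : γ, w j * A j k * w k
      = schur A γ i +
        (w + (psub A γ)⁻¹ *ᵥ (fun j : γ => A ((j : Fin n)) i)) ⬝ᵥ
          (psub A γ) *ᵥ (w + (psub A γ)⁻¹ *ᵥ (fun j : γ => A ((j : Fin n)) i)) := by
  set B := psub A γ with hB
  set x : γ → ℝ := fun j => A ((j : Fin n)) i with hx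
  set y : γ → ℝ := B⁻¹ *ᵥ x with hy
  have hunit : IsUnit B.det := (ne_of_gt (psub_posDef hA γ).det_pos).isUnit
  have hBy : B *ᵥ y = x := by
    rw [hy, Matrix.mulVec_mulVec, Matrix.mul_nonsing_inv B hunit, Matrix.one_mulVec]
  have hsymm : Bᵀ = B := psub_symm hA γ
  have h1 : ∑ j : γ, w j * A i j = w ⬝ᵥ x := by
    apply Finset.sum_congr rfl; intro j _
    rw [A_symm hA i (j : Fin n)]
  have h2 : ∑ j : γ, ∑ k : γ, w j * A j k * w k = w ⬝ᵥ B *ᵥ w := by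
    simp only [dotProduct, mulVec, Finset.mul_sum]
    apply Finset.sum_congr rfl; intro j _
    apply Finset.sum_congr rfl; intro k _
    show w j * A (j:Fin n) (k:Fin n) * w k = w j * (A (j:Fin n) (k:Fin n) * w k)
    ring
  have hschur : schur A γ i = A i i - x ⬝ᵥ y := rfl
  have hyBw : y ⬝ᵥ B *ᵥ w = x ⬝ᵥ w := by
    rw [Matrix.dotProduct_mulVec, ← Matrix.mulVec_transpose, hsymm, hBy]
  have hwBy : w ⬝ᵥ B *ᵥ y = w ⬝ᵥ x := by rw [hBy]
  have hyBy : y ⬝ᵥ B *ᵥ y = y ⬝ᵥ x := by rw [hBy]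
  have hexp : (w + y) ⬝ᵥ B *ᵥ (w + y)
      = w ⬝ᵥ B *ᵥ w + w ⬝ᵥ x + x ⬝ᵥ w + y ⬝ᵥ x := by
    rw [Matrix.mulVec_add, dotProduct_add, add_dotProduct,
      add_dotProduct, hwBy, hyBw, hyBy]
    ring
  rw [h1, h2, hschur, hexp, dotProduct_comm x w, dotProduct_comm x y]
  ring

lemma schur_le {A : Matrix (Fin n) (Fin n) ℝ} (hA : A.PosDef) (γ : Finset (Fin n))
    (i : Fin n) (w : γ → ℝ) :
    schur A γ i ≤
      A i i + 2 * ∑ j : γ, w j * A i j + ∑ j : γ, ∑ k : γ, w j * A j k * w k := by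
  rw [quad_decomp hA γ i w]
  have := (psub_posDef hA γ).posSemidef.dotProduct_mulVec_nonneg
      (w + (psub A γ)⁻¹ *ᵥ (fun j : γ => A ((j : Fin n)) i))
  simp only [star_trivial] at this
  linarith [this]

lemma schur_eq {A : Matrix (Fin n) (Fin n) ℝ} (hA : A.PosDef) (γ : Finset (Fin n))
    (i : Fin n) :
    schur A γ i =
      A i i + 2 * ∑ j : γ, (-((psub A γ)⁻¹ *ᵥ (fun j : γ => A ((j : Fin n)) i))) j * A i j +
        ∑ j : γ, ∑ k : γ,
          (-((psub A γ)⁻¹ *ᵥ (fun j : γ => A ((j : Fin n)) i))) j * A j k *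
          (-((psub A γ)⁻¹ *ᵥ (fun j : γ => A ((j : Fin n)) i))) k := by
  rw [quad_decomp hA γ i]
  simp

lemma schur_mono {A : Matrix (Fin n) (Fin n) ℝ} (hA : A.PosDef) {γ δ : Finset (Fin n)}
    (hsub : γ ⊆ δ) (i : Fin n) :
    schur A δ i ≤ schur A γ i := by
  set w : γ → ℝ := -((psub A γ)⁻¹ *ᵥ (fun j : γ => A ((j : Fin n)) i)) with hw
  set w' : δ → ℝ := fun j => if h : (j : Fin n) ∈ γ then w ⟨j, h⟩ else 0 with hw'
  have h1 : ∑ j : δ, w' j * A i j = ∑ j : γ, w j * A i j :=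
    sum_restrict hsub w (fun j => A i j)
  have h2 : ∑ j : δ, ∑ k : δ, w' j * A j k * w' k
      = ∑ j : γ, ∑ k : γ, w j * A j k * w k := by
    have inner : ∀ j : Fin n, ∑ k : δ, w' k * A j k = ∑ k : γ, w k * A j k := fun j =>
      sum_restrict hsub w (fun k => A j k)
    calc ∑ j : δ, ∑ k : δ, w' j * A j k * w' k
        = ∑ j : δ, w' j * ∑ k : δ, w' k * A (j:Fin n) k := by
          apply Finset.sum_congr rfl; intro j _
          rw [Finset.mul_sum]; apply Finset.sum_congr rfl; intro k _; ring
      _ = ∑ j : δ, w' j * ∑ k : γ, w k * A (j:Fin n) k := by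
          apply Finset.sum_congr rfl; intro j _; rw [inner]
      _ = ∑ j : γ, w j * ∑ k : γ, w k * A (j:Fin n) k :=
          sum_restrict hsub w (fun j => ∑ k : γ, w k * A j k)
      _ = ∑ j : γ, ∑ k : γ, w j * A j k * w k := by
          apply Finset.sum_congr rfl; intro j _
          rw [Finset.mul_sum]; apply Finset.sum_congr rfl; intro k _; ring
  calc schur A δ i
      ≤ A i i + 2 * ∑ j : δ, w' j * A i j + ∑ j : δ, ∑ k : δ, w' j * A j k * w' k :=
        schur_le hA δ i w'
    _ = A i i + 2 * ∑ j : γ, w j * A i j + ∑ j : γ, ∑ k : γ, w j * A j k * w k := by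
        rw [h1, h2]
    _ = schur A γ i := (schur_eq hA γ i).symm

/-- Determinant recursion via the Schur complement. -/
lemma det_insert {A : Matrix (Fin n) (Fin n) ℝ} (hA : A.PosDef) {γ : Finset (Fin n)}
    {i : Fin n} (hi : i ∉ γ) :
    (psub A (insert i γ)).det = (psub A γ).det * schur A γ i := by
  classical
  set B := psub A γ with hB
  have hunit : IsUnit B.det := (ne_of_gt (psub_posDef hA γ).det_pos).isUnit
  haveI : Invertible B := B.invertibleOfIsUnitDet hunit
  let e : (γ : Type) ⊕ PUnit.{1} ≃ {x // x ∈ insert i γ} :=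
    (Equiv.optionEquivSumPUnit.{0,0} (γ : Type)).symm.trans
      (Finset.subtypeInsertEquivOption hi).symm
  let C : Matrix (γ : Type) PUnit.{1} ℝ := fun j _ => A ((j : Fin n)) i
  let R : Matrix PUnit.{1} (γ : Type) ℝ := fun _ j => A i ((j : Fin n))
  let D : Matrix PUnit.{1} PUnit.{1} ℝ := fun _ _ => A i i
  have hmat : (psub A (insert i γ)).submatrix e e = Matrix.fromBlocks B C R D := by
    ext a b
    rcases a with j | u <;> rcases b with k | v <;> rfl
  have hdet1 : (psub A (insert i γ)).det = (Matrix.fromBlocks B C R D).det := by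
    rw [← hmat, Matrix.det_submatrix_equiv_self]
  rw [hdet1, Matrix.det_fromBlocks₁₁]
  congr 1
  rw [Matrix.det_unique]
  show D PUnit.unit PUnit.unit - (R * ⅟B * C) PUnit.unit PUnit.unit = schur A γ i
  rw [Matrix.invOf_eq_nonsing_inv]
  have : (R * B⁻¹ * C) PUnit.unit PUnit.unit
      = (fun j : γ => A ((j : Fin n)) i) ⬝ᵥ B⁻¹ *ᵥ (fun j : γ => A ((j : Fin n)) i) := by
    simp only [Matrix.mul_apply, dotProduct, mulVec, Finset.sum_mul, Finset.mul_sum, R, C]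
    rw [Finset.sum_comm]
    apply Finset.sum_congr rfl; intro l _
    show (∑ x : γ, A i (x : Fin n) * B⁻¹ x l) * A (l : Fin n) i = _
    rw [Finset.sum_mul]
    apply Finset.sum_congr rfl; intro k _
    rw [A_symm hA i (k : Fin n)]
    ring
  rw [this]
  rfl

lemma schur_pos {A : Matrix (Fin n) (Fin n) ℝ} (hA : A.PosDef) {γ : Finset (Fin n)}
    {i : Fin n} (hi : i ∉ γ) : 0 < schur A γ i := by
  have h1 : 0 < (psub A (insert i γ)).det := (psub_posDef hA _).det_pos
  have h2 : 0 < (psub A γ).det := (psub_posDef hA _).det_pos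
  have := det_insert hA hi
  nlinarith

/-- The strictly-below set. -/
def ltS (i : Fin n) : Finset (Fin n) := Finset.univ.filter fun j => j < i

lemma det_telescope {A : Matrix (Fin n) (Fin n) ℝ} (hA : A.PosDef) :
    A.det = ∏ i : Fin n, schur A (ltS i) i := by
  classical
  have key : ∀ k : ℕ, k ≤ n →
      (psub A (Finset.univ.filter fun j : Fin n => (j : ℕ) < k)).det
        = ∏ i ∈ (Finset.univ.filter fun i : Fin n => (i : ℕ) < k), schur A (ltS i) i := by
    intro k
    induction k with
    | zero =>
      intro _
      have h0 : (Finset.univ.filter fun j : Fin n => (j : ℕ) < 0) = ∅ := by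
        ext j; simp
      rw [h0]
      simp [Matrix.det_isEmpty]
    | succ k ih =>
      intro hk
      have hk' : k < n := hk
      set i : Fin n := ⟨k, hk'⟩ with hi
      have hset : (Finset.univ.filter fun j : Fin n => (j : ℕ) < k + 1)
          = insert i (Finset.univ.filter fun j : Fin n => (j : ℕ) < k) := by
        ext j
        simp only [Finset.mem_filter, Finset.mem_univ, true_and, Finset.mem_insert,
          Fin.ext_iff, hi]
        omega
      have hltS : (Finset.univ.filter fun j : Fin n => (j : ℕ) < k) = ltS i := by
        ext j
        simp [ltS, Fin.lt_def, hi]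
      have hnotmem : i ∉ (Finset.univ.filter fun j : Fin n => (j : ℕ) < k) := by
        simp [hi]
      rw [hset, Finset.prod_insert hnotmem, det_insert hA hnotmem, ih (le_of_lt hk'), hltS]
      ring
  have huniv : (Finset.univ.filter fun j : Fin n => (j : ℕ) < n) = Finset.univ := by
    ext j; simp [j.2]
  have hfull := key n le_rfl
  rw [huniv] at hfull
  have hAdet : (psub A Finset.univ).det = A.det := by
    have he : psub A (Finset.univ : Finset (Fin n))
        = A.submatrix (Equiv.subtypeUnivEquiv (fun x : Fin n => Finset.mem_univ x))
            (Equiv.subtypeUnivEquiv (fun x : Fin n => Finset.mem_univ x)) := rfl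
    rw [he, Matrix.det_submatrix_equiv_self]
  rw [← hAdet, hfull]

end Stmt16Aux

open Stmt16Aux in
theorem stmt16 {n : ℕ} (A : Matrix (Fin n) (Fin n) ℝ) (hA : A.PosDef)
    (E : Finset (Fin n × Fin n))
    (hlow : ∀ p ∈ E, p.2 ≤ p.1) (hdiag : ∀ i : Fin n, (i, i) ∈ E) :
    Real.log A.det ≤ Dapprox A E ∧
    (E = Finset.univ.filter (fun p : Fin n × Fin n => p.2 ≤ p.1) →
      Real.log A.det = Dapprox A E) := by
  classical
  -- rewrite Dapprox as a sum of log schur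
  have hiRow : ∀ i : Fin n, i ∈ rowSet E i := fun i => by
    simp [rowSet, hdiag i]
  have hins : ∀ i : Fin n, rowSet E i = insert i ((rowSet E i).erase i) := fun i =>
    (Finset.insert_erase (hiRow i)).symm
  have hterm : ∀ i : Fin n,
      Real.log ((psub A ((rowSet E i).erase i)).det / (psub A (rowSet E i)).det)
        = -Real.log (schur A ((rowSet E i).erase i) i) := by
    intro i
    have hdet : (psub A (rowSet E i)).det
        = (psub A ((rowSet E i).erase i)).det * schur A ((rowSet E i).erase i) i := by
      conv_lhs => rw [hins i]
      exact det_insert hA (Finset.notMem_erase i _)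
    have h1 : (0:ℝ) < (psub A ((rowSet E i).erase i)).det := (psub_posDef hA _).det_pos
    have h2 : (0:ℝ) < schur A ((rowSet E i).erase i) i :=
      schur_pos hA (Finset.notMem_erase i _)
    rw [hdet, show (psub A ((rowSet E i).erase i)).det /
        ((psub A ((rowSet E i).erase i)).det * schur A ((rowSet E i).erase i) i)
        = (schur A ((rowSet E i).erase i) i)⁻¹ by field_simp]
    exact Real.log_inv _
  have hDa : Dapprox A E = ∑ i : Fin n, Real.log (schur A ((rowSet E i).erase i) i) := by
    unfold Dapprox
    rw [Finset.sum_congr rfl (fun i _ => hterm i)]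
    simp
  have hld : Real.log A.det = ∑ i : Fin n, Real.log (schur A (ltS i) i) := by
    rw [det_telescope hA, Real.log_prod]
    intro i _
    exact ne_of_gt (schur_pos hA (by simp [ltS]))
  constructor
  · rw [hld, hDa]
    apply Finset.sum_le_sum
    intro i _
    apply Real.log_le_log (schur_pos hA (by simp [ltS]))
    apply schur_mono hA
    intro j hj
    simp only [Finset.mem_erase, rowSet, Finset.mem_filter, Finset.mem_univ, true_and] at hj
    simp only [ltS, Finset.mem_filter, Finset.mem_univ, true_and]
    exact lt_of_le_of_ne (hlow (i, j) hj.2) hj.1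
  · intro hE
    rw [hld, hDa]
    apply Finset.sum_congr rfl
    intro i _
    have : (rowSet E i).erase i = ltS i := by
      ext j
      simp only [Finset.mem_erase, rowSet, hE, Finset.mem_filter, Finset.mem_univ, true_and,
        ltS]
      constructor
      · rintro ⟨hne, hle⟩; exact lt_of_le_of_ne hle hne
      · intro hlt; exact ⟨ne_of_lt hlt, le_of_lt hlt⟩
    rw [this]
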